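/- Let N ≥ 2, 0 < R₀ < R₁ and 0 ≤ s < R₁ + R₀. Then the radius of a maximal ball inscribed in Ω_s equals (R₁ − R₀ + s)/2; that is, (R₁ − R₀ + s)/2 is the greatest element of the set { r > 0 : there exists x ∈ ℝ^N with B_r(x) ⊆ Ω_s }. -/

import Mathlib

open MeasureTheory Metric Set Filter
open scoped RealInnerProductSpace ENNReal Topology

/-- The first Dirichlet eigenvalue of the p-Laplacian on `Ω`, defined variationally as the
infimum of Rayleigh quotients of smooth, not identically zero functions with compact
support contained in `Ω`. -/
noncomputable def lam1 {N : ℕ} (p : ℝ) (Ω : Set (EuclideanSpace ℝ (Fin N))) : ℝ :=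
  sInf { r : ℝ | ∃ u : EuclideanSpace ℝ (Fin N) → ℝ,
    ContDiff ℝ (⊤ : ℕ∞) u ∧ u ≠ 0 ∧ HasCompactSupport u ∧ tsupport u ⊆ Ω ∧
    r = (∫ x in Ω, ‖gradient u x‖ ^ p) / (∫ x in Ω, |u x| ^ p) }

/-- The first standard basis vector `e₁` of `ℝ^N`. -/
noncomputable def e1 (N : ℕ) : EuclideanSpace ℝ (Fin N) :=
  (WithLp.equiv 2 (Fin N → ℝ)).symm (fun i => if (i : ℕ) = 0 then 1 else 0)

/-- The eccentric annulus `Ω_s = B_{R₁}(0) \ closure (B_{R₀}(s e₁))`. -/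
noncomputable def Om (N : ℕ) (R₀ R₁ s : ℝ) : Set (EuclideanSpace ℝ (Fin N)) :=
  ball 0 R₁ \ closure (ball (s • e1 N) R₀)

/-- `u` is a first eigenfunction of the p-Laplacian on `Ω` with eigenvalue `lam`:
C¹ on an open set containing the closure of `Ω`, positive in `Ω`, zero on `∂Ω`, and a weak
solution of `−Δ_p u = lam · u^{p−1}`. -/
def IsFirstEigenfunction {N : ℕ} (p : ℝ) (Ω : Set (EuclideanSpace ℝ (Fin N)))
    (lam : ℝ) (u : EuclideanSpace ℝ (Fin N) → ℝ) : Prop :=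
  (∃ V : Set (EuclideanSpace ℝ (Fin N)), IsOpen V ∧ closure Ω ⊆ V ∧ ContDiffOn ℝ 1 u V) ∧
  (∀ x ∈ Ω, 0 < u x) ∧
  (∀ x ∈ frontier Ω, u x = 0) ∧
  (∀ φ : EuclideanSpace ℝ (Fin N) → ℝ, ContDiff ℝ (⊤ : ℕ∞) φ → HasCompactSupport φ →
    tsupport φ ⊆ Ω →
    ∫ x in Ω, ‖gradient u x‖ ^ (p - 2) * ⟪gradient u x, gradient φ x⟫ =
      lam * ∫ x in Ω, (u x) ^ (p - 1) * φ x)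


lemma norm_e1 (N : ℕ) (hN : 0 < N) : ‖e1 N‖ = 1 := by
  have h : e1 N = EuclideanSpace.single (⟨0, hN⟩ : Fin N) (1 : ℝ) := by
    unfold e1 EuclideanSpace.single
    congr 1
    ext j
    rcases eq_or_ne j (⟨0, hN⟩ : Fin N) with h | h
    · simp [h, Pi.single_apply]
    · have : (j : ℕ) ≠ 0 := fun hc => h (Fin.ext hc)
      simp [this, Pi.single_apply, h]
  rw [h, EuclideanSpace.norm_single]
  simp

theorem stmt3 (N : ℕ) (hN : 2 ≤ N) (R₀ R₁ : ℝ) (hR₀ : 0 < R₀) (hR : R₀ < R₁)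
    (s : ℝ) (hs : 0 ≤ s) (hs' : s < R₁ + R₀) :
    IsGreatest {r : ℝ | 0 < r ∧ ∃ x : EuclideanSpace ℝ (Fin N), ball x r ⊆ Om N R₀ R₁ s}
      ((R₁ - R₀ + s) / 2) := by
  have hNpos : 0 < N := by omega
  have he1 : ‖e1 N‖ = 1 := norm_e1 N hNpos
  set r := (R₁ - R₀ + s) / 2 with hrdef
  have hrpos : 0 < r := by rw [hrdef]; linarith
  constructor
  · refine ⟨hrpos, (-(R₁ + R₀ - s) / 2) • e1 N, fun y hy => ?_⟩
    rw [mem_ball] at hy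
    have hd0 : dist ((-(R₁ + R₀ - s) / 2) • e1 N) (0 : EuclideanSpace ℝ (Fin N))
        = (R₁ + R₀ - s) / 2 := by
      rw [dist_zero_right, norm_smul, he1]
      rw [Real.norm_eq_abs, abs_of_nonpos (by linarith)]
      ring
    have hds : dist ((-(R₁ + R₀ - s) / 2) • e1 N) (s • e1 N) = (R₁ + R₀ + s) / 2 := by
      rw [dist_eq_norm, ← sub_smul, norm_smul, he1]
      rw [Real.norm_eq_abs, abs_of_nonpos (by linarith)]
      ring
    constructor
    · rw [mem_ball]
      calc dist y 0 ≤ dist y ((-(R₁ + R₀ - s) / 2) • e1 N)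
            + dist ((-(R₁ + R₀ - s) / 2) • e1 N) 0 := dist_triangle _ _ _
        _ < r + (R₁ + R₀ - s) / 2 := by rw [hd0]; linarith
        _ = R₁ := by rw [hrdef]; ring
    · intro hy'
      have := closure_ball_subset_closedBall hy'
      rw [mem_closedBall] at this
      have htri := dist_triangle ((-(R₁ + R₀ - s) / 2) • e1 N) y (s • e1 N)
      rw [hds, dist_comm] at htri
      have : (R₁ + R₀ + s) / 2 < r + R₀ := by linarith
      rw [hrdef] at this; linarith
  · rintro ρ ⟨hρ, x, hsub⟩
    have hx1 : x ∈ ball (0 : EuclideanSpace ℝ (Fin N)) R₁ :=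
      (hsub (mem_ball_self hρ)).1
    rw [mem_ball, dist_zero_right] at hx1
    -- ‖x‖ + ρ ≤ R₁
    have hball1 : ‖x‖ + ρ ≤ R₁ := by
      by_contra hcon
      push_neg at hcon
      set t := (ρ + R₁ - ‖x‖) / 2 with ht
      have ht1 : R₁ - ‖x‖ < t := by rw [ht]; linarith
      have ht2 : t < ρ := by rw [ht]; linarith
      have ht0 : 0 < t := by linarith
      obtain ⟨v, hv1, hxtv⟩ : ∃ v : EuclideanSpace ℝ (Fin N),
          ‖v‖ = 1 ∧ ‖x + t • v‖ = ‖x‖ + t := by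
        rcases eq_or_ne x 0 with h0 | h0
        · exact ⟨e1 N, he1, by simp [h0, norm_smul, he1, abs_of_pos ht0]⟩
        · have hxn : (0:ℝ) < ‖x‖ := norm_pos_iff.mpr h0
          refine ⟨‖x‖⁻¹ • x, ?_, ?_⟩
          · rw [norm_smul, Real.norm_eq_abs, abs_of_pos (by positivity)]
            field_simp
          · have : x + t • ‖x‖⁻¹ • x = (1 + t * ‖x‖⁻¹) • x := by
              rw [add_smul, one_smul, smul_smul]
            rw [this, norm_smul, Real.norm_eq_abs,
              abs_of_pos (by positivity)]
            field_simp
      have hmem : x + t • v ∈ ball x ρ := by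
        rw [mem_ball, dist_eq_norm]
        rw [add_sub_cancel_left, norm_smul, hv1, Real.norm_eq_abs, abs_of_pos ht0]
        simpa using ht2
      have := (hsub hmem).1
      rw [mem_ball, dist_zero_right, hxtv] at this
      linarith
    -- ρ + R₀ ≤ dist x (s • e1)
    have hdisj : Disjoint (ball x ρ) (closedBall (s • e1 N) R₀) := by
      rw [Set.disjoint_left]
      intro y hy hy'
      have := (hsub hy).2
      exact this (by rw [closure_ball _ hR₀.ne']; exact hy')
    have hsep : ρ + R₀ ≤ dist x (s • e1 N) :=
      (disjoint_ball_closedBall_iff hρ hR₀.le).mp hdisj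
    have hse : ‖s • e1 N‖ = s := by
      rw [norm_smul, he1, Real.norm_eq_abs, abs_of_nonneg hs]; ring
    have htri : dist x (s • e1 N) ≤ ‖x‖ + s := by
      calc dist x (s • e1 N) ≤ dist x 0 + dist 0 (s • e1 N) := dist_triangle _ _ _
        _ = ‖x‖ + s := by rw [dist_zero_right, dist_comm, dist_zero_right, hse]
    rw [hrdef]
    linarith
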